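/- arXiv:0805.4362 — 3 statements merged into one kernel-verified Lean document; each statement's English description precedes it below -/
import Mathlib

section
/- Let K > 0, Λ ∈ ℝ, c > 0 (the product λκ) and 0 < p_uv < √K, and let p(i) := √(P(i)) with P(i) = K·(E(i)·(p_uv² + K) + (p_uv² − K))/(E(i)·(p_uv² + K) − (p_uv² − K)), E(i) = exp(2c(Λ − i)), and q(i) := K/p(i), for i ≤ Λ. Then p is strictly decreasing and q is strictly increasing on (−∞, Λ], with p_uv ≤ p(i) < √K < q(i) ≤ K/p_uv, and in the infrared limit both converge to the non-Gaussian fixed point: lim_{i → −∞} p(i) = lim_{i → −∞} q(i) = √K. -/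
/-!
With `a = p_uv² + K > 0` and `b = p_uv² - K < 0` one has `P = K · g ∘ E` for the Möbius map
`g e = (e a + b) / (e a - b) = 1 + 2 b / (e a - b)`, which increases strictly on `e ≥ 0`, stays
below `1` and tends to `1` as `e → ∞`. Since `E` decreases strictly, with `E Λ = 1` and `E → ∞`
as `i → -∞`, `P` grows in the infrared direction from `P Λ = p_uv²` towards `K` without reaching
it; `p = √P` and `q = K / p` inherit monotonicity, bounds and limits.
-/

open Filter Set Topology Real

noncomputable def mobiusRatio (a b e : ℝ) : ℝ := (e * a + b) / (e * a - b)

section MobiusRatio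

variable {a b e : ℝ}

lemma mobiusRatio_eq_one_add (h : e * a - b ≠ 0) :
    mobiusRatio a b e = 1 + 2 * b / (e * a - b) := by
  rw [mobiusRatio]; field_simp; ring

lemma strictMonoOn_mobiusRatio (ha : 0 < a) (hb : b < 0) :
    StrictMonoOn (mobiusRatio a b) (Ici 0) := by
  intro e₁ he₁ e₂ he₂ h
  have hd₁ : 0 < e₁ * a - b := by nlinarith [mem_Ici.1 he₁]
  have hd₂ : e₁ * a - b < e₂ * a - b := by nlinarith
  rw [mobiusRatio_eq_one_add hd₁.ne', mobiusRatio_eq_one_add (hd₁.trans hd₂).ne']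
  have hquot := div_lt_div_of_pos_left (neg_pos.2 (mul_neg_of_pos_of_neg two_pos hb)) hd₁ hd₂
  rw [neg_div, neg_div] at hquot
  linarith

lemma mobiusRatio_lt_one (ha : 0 < a) (hb : b < 0) (he : 0 ≤ e) : mobiusRatio a b e < 1 := by
  rw [mobiusRatio, div_lt_one (by nlinarith)]; linarith

lemma tendsto_mobiusRatio_atTop (ha : 0 < a) : Tendsto (mobiusRatio a b) atTop (𝓝 1) := by
  have hden : Tendsto (fun e => e * a - b) atTop atTop :=
    tendsto_atTop_add_const_right _ _ (tendsto_id.atTop_mul_const ha)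
  have hlim : Tendsto (fun e => 1 + 2 * b / (e * a - b)) atTop (𝓝 1) := by
    simpa using (hden.const_div_atTop (2 * b)).const_add 1
  refine hlim.congr' ?_
  filter_upwards [hden.eventually_gt_atTop 0] with e he
  exact (mobiusRatio_eq_one_add he.ne').symm

end MobiusRatio

/-- The explicit solution `P i = p(i)²` of the flow, with `E i` written out. -/
noncomputable def gwFlowSq (K c Λ puv i : ℝ) : ℝ :=
  K * mobiusRatio (puv ^ 2 + K) (puv ^ 2 - K) (exp (2 * c * (Λ - i)))

section GWFlowSq

variable {K c Λ puv : ℝ}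

lemma gwFlowSq_self (hK : K ≠ 0) : gwFlowSq K c Λ puv Λ = puv ^ 2 := by
  have h2K : puv ^ 2 + K - (puv ^ 2 - K) = 2 * K := by ring
  rw [gwFlowSq, mobiusRatio, sub_self, mul_zero, exp_zero, one_mul, h2K]
  field_simp
  ring

lemma strictAnti_gwFlowSq (hK : 0 < K) (hc : 0 < c) (hpuv : puv ^ 2 < K) :
    StrictAnti (gwFlowSq K c Λ puv) := by
  intro i j hij
  have hexp : exp (2 * c * (Λ - j)) < exp (2 * c * (Λ - i)) := exp_lt_exp.2 (by nlinarith)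
  exact mul_lt_mul_of_pos_left (strictMonoOn_mobiusRatio (by positivity) (by linarith)
    (exp_pos _).le (exp_pos _).le hexp) hK

lemma gwFlowSq_lt (hK : 0 < K) (hpuv : puv ^ 2 < K) (i : ℝ) : gwFlowSq K c Λ puv i < K :=
  mul_lt_of_lt_one_right hK (mobiusRatio_lt_one (by positivity) (by linarith) (exp_pos _).le)

lemma tendsto_gwFlowSq_atBot (hK : 0 < K) (hc : 0 < c) :
    Tendsto (gwFlowSq K c Λ puv) atBot (𝓝 K) := by
  have hexp : Tendsto (fun i => exp (2 * c * (Λ - i))) atBot atTop := by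
    refine tendsto_exp_atTop.comp (Tendsto.const_mul_atTop (by positivity) ?_)
    exact (tendsto_atTop_add_const_left _ Λ tendsto_neg_atBot_atTop).congr
      fun i => (sub_eq_add_neg Λ i).symm
  have hlim := ((tendsto_mobiusRatio_atTop (a := puv ^ 2 + K) (b := puv ^ 2 - K)
    (by positivity)).comp hexp).const_mul K
  rwa [mul_one] at hlim

end GWFlowSq

lemma StrictAntiOn.const_div {α : Type*} [Preorder α] {s : Set α} {K : ℝ} {p : α → ℝ}
    (hp : StrictAntiOn p s) (hK : 0 < K) (hpos : ∀ i ∈ s, 0 < p i) :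
    StrictMonoOn (fun i => K / p i) s :=
  fun _ hi _ hj hij => div_lt_div_of_pos_left hK (hpos _ hj) (hp hi hj hij)

/-- Infrared behaviour of the one-loop RG flow of the Grosse–Wulkenhaar model in a magnetic
field: along the explicit solution `p(i) = √(P(i))`, `q(i) = K/p(i)`, the function `p` is
strictly decreasing and `q` strictly increasing on `(−∞, Λ]`, with
`p_uv ≤ p(i) < √K < q(i) ≤ K/p_uv`, and both converge to the non-Gaussian infrared fixed
point `√K` as `i → −∞`. -/
theorem gw_flow_infrared_fixed_point (K Λ c puv : ℝ) (hK : 0 < K) (hc : 0 < c)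
    (hpuv : 0 < puv) (hpuvK : puv < Real.sqrt K)
    (E P p q : ℝ → ℝ)
    (hE : ∀ i, E i = Real.exp (2 * c * (Λ - i)))
    (hP : ∀ i, P i = K * (E i * (puv ^ 2 + K) + (puv ^ 2 - K))
        / (E i * (puv ^ 2 + K) - (puv ^ 2 - K)))
    (hp : ∀ i, p i = Real.sqrt (P i))
    (hq : ∀ i, q i = K / p i) :
    StrictAntiOn p (Set.Iic Λ)
    ∧ StrictMonoOn q (Set.Iic Λ)
    ∧ (∀ i ≤ Λ, puv ≤ p i ∧ p i < Real.sqrt K ∧ Real.sqrt K < q i ∧ q i ≤ K / puv)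
    ∧ Filter.Tendsto p Filter.atBot (nhds (Real.sqrt K))
    ∧ Filter.Tendsto q Filter.atBot (nhds (Real.sqrt K)) := by
  have hpuv2 : puv ^ 2 < K := (lt_sqrt hpuv.le).1 hpuvK
  obtain rfl : P = gwFlowSq K c Λ puv := funext fun i => by
    rw [hP, hE, gwFlowSq, mobiusRatio, mul_div_assoc]
  obtain rfl : q = fun i => K / p i := funext hq
  have hPanti := strictAnti_gwFlowSq (Λ := Λ) hK hc hpuv2
  have hPlower : ∀ i ≤ Λ, puv ^ 2 ≤ gwFlowSq K c Λ puv i := fun i hi =>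
    gwFlowSq_self hK.ne' ▸ hPanti.antitone hi
  have hpanti : StrictAntiOn p (Iic Λ) := fun i _ j hj hij => by
    rw [hp, hp]
    exact sqrt_lt_sqrt ((sq_nonneg puv).trans (hPlower j hj)) (hPanti hij)
  have hlower : ∀ i ≤ Λ, puv ≤ p i := fun i hi => hp i ▸ le_sqrt_of_sq_le (hPlower i hi)
  have hupper : ∀ i, p i < √K := fun i =>
    hp i ▸ (sqrt_lt_sqrt_iff_of_pos hK).2 (gwFlowSq_lt hK hpuv2 i)
  have hplim : Tendsto p atBot (𝓝 √K) :=
    ((continuous_sqrt.tendsto K).comp (tendsto_gwFlowSq_atBot hK hc)).congr fun i => (hp i).symm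
  refine ⟨hpanti, hpanti.const_div hK fun i hi => hpuv.trans_le (hlower i hi),
    fun i hi => ⟨hlower i hi, hupper i, ?_, div_le_div_of_nonneg_left hK.le hpuv (hlower i hi)⟩,
    hplim, ?_⟩
  · calc √K = K / √K := div_sqrt.symm
      _ < K / p i := div_lt_div_of_pos_left hK (hpuv.trans_le (hlower i hi)) (hupper i)
  · have hqlim := (tendsto_const_nhds (x := K)).div hplim (sqrt_pos.2 hK).ne'
    rwa [div_sqrt] at hqlim
end

section
/- Let K > 0, Λ ∈ ℝ, c > 0 (the product λκ) and 0 < p_uv < √K, and extend the explicit solution P(i) = K·(E(i)·(p_uv² + K) + (p_uv² − K))/(E(i)·(p_uv² + K) − (p_uv² − K)), E(i) = exp(2c(Λ − i)), to all i ∈ ℝ. Then the denominator is strictly positive for every i ∈ ℝ, and setting i* := Λ + (1/(2c))·ln((K + p_uv²)/(K − p_uv²)) one has i* > Λ, P(i) > 0 for all i < i*, P(i*) = 0, and P(i) < 0 for all i > i*. Hence the flow trajectory p(i) = √(P(i)) exists only on (−∞, i*) and reaches p = 0 at the finite ultraviolet slice i*: there is no ultraviolet fixed point of the flow. -/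
/-- No ultraviolet fixed point for the one-loop RG flow of the Grosse–Wulkenhaar model in a
magnetic field: extending the explicit solution
`P(i) = K(E(i)(p_uv² + K) + (p_uv² − K))/(E(i)(p_uv² + K) − (p_uv² − K))`, `E(i) = e^{2c(Λ−i)}`,
to all `i ∈ ℝ`, the denominator is strictly positive everywhere, and with
`i* = Λ + (1/(2c))·ln((K + p_uv²)/(K − p_uv²))` one has `Λ < i*`, `P(i) > 0` for `i < i*`,
`P(i*) = 0` and `P(i) < 0` for `i > i*`; hence the trajectory `p = √P` reaches `p = 0` at the
finite ultraviolet slice `i*`. -/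
theorem gw_flow_no_uv_fixed_point (K Λ c puv : ℝ) (hK : 0 < K) (hc : 0 < c)
    (hpuv : 0 < puv) (hpuvK : puv < Real.sqrt K)
    (E P : ℝ → ℝ)
    (hE : ∀ i, E i = Real.exp (2 * c * (Λ - i)))
    (hP : ∀ i, P i = K * (E i * (puv ^ 2 + K) + (puv ^ 2 - K))
        / (E i * (puv ^ 2 + K) - (puv ^ 2 - K)))
    (istar : ℝ)
    (histar : istar = Λ + 1 / (2 * c) * Real.log ((K + puv ^ 2) / (K - puv ^ 2))) :
    (∀ i : ℝ, 0 < E i * (puv ^ 2 + K) - (puv ^ 2 - K))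
    ∧ Λ < istar
    ∧ (∀ i < istar, 0 < P i)
    ∧ P istar = 0
    ∧ (∀ i > istar, P i < 0) := by
  have haK : puv ^ 2 < K := by
    have := Real.sq_sqrt hK.le
    nlinarith [Real.sqrt_nonneg K]
  have hden : ∀ i : ℝ, 0 < E i * (puv ^ 2 + K) - (puv ^ 2 - K) := by
    intro i
    have hEpos : 0 < E i := by rw [hE i]; exact Real.exp_pos _
    nlinarith
  have hratio : (1 : ℝ) < (K + puv ^ 2) / (K - puv ^ 2) := by
    rw [lt_div_iff₀ (by linarith)]; nlinarith
  have hlogpos : 0 < Real.log ((K + puv ^ 2) / (K - puv ^ 2)) :=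
    Real.log_pos hratio
  have hΛ : Λ < istar := by
    rw [histar]
    have : 0 < 1 / (2 * c) * Real.log ((K + puv ^ 2) / (K - puv ^ 2)) := by
      positivity
    linarith
  -- key : 2c(Λ - istar) = log ((K - a)/(K + a))
  have hkey : 2 * c * (Λ - istar) = Real.log ((K - puv ^ 2) / (K + puv ^ 2)) := by
    rw [histar]
    have h1 : Real.log ((K - puv ^ 2) / (K + puv ^ 2)) =
        - Real.log ((K + puv ^ 2) / (K - puv ^ 2)) := by
      rw [← Real.log_inv, inv_div]
    rw [h1]
    field_simp
    ring
  have hEstar : E istar = (K - puv ^ 2) / (K + puv ^ 2) := by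
    rw [hE, hkey, Real.exp_log (div_pos (by linarith) (by positivity))]
  -- numerator sign
  have hnum : ∀ i : ℝ, E i * (puv ^ 2 + K) + (puv ^ 2 - K) =
      (Real.exp (2 * c * (Λ - i)) - (K - puv ^ 2) / (K + puv ^ 2)) * (puv ^ 2 + K) := by
    intro i
    rw [hE]
    field_simp
    ring
  have hPstar : P istar = 0 := by
    rw [hP, hnum, ← hE, hEstar]
    simp
  refine ⟨hden, hΛ, ?_, hPstar, ?_⟩
  · intro i hi
    rw [hP]
    apply div_pos _ (hden i)
    apply mul_pos hK
    rw [hnum]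
    apply mul_pos _ (by positivity)
    have : (K - puv ^ 2) / (K + puv ^ 2) = Real.exp (2 * c * (Λ - istar)) := by
      rw [hkey, Real.exp_log (div_pos (by linarith) (by positivity))]
    rw [this, sub_pos, Real.exp_lt_exp]
    nlinarith
  · intro i hi
    rw [hP]
    apply div_neg_of_neg_of_pos _ (hden i)
    have : E i * (puv ^ 2 + K) + (puv ^ 2 - K) < 0 := by
      rw [hnum]
      apply mul_neg_of_neg_of_pos _ (by positivity)
      have h2 : (K - puv ^ 2) / (K + puv ^ 2) = Real.exp (2 * c * (Λ - istar)) := by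
        rw [hkey, Real.exp_log (div_pos (by linarith) (by positivity))]
      rw [h2, sub_neg, Real.exp_lt_exp]
      nlinarith
    nlinarith
end

section
/- Let M ≥ 2 be an integer, q > 0 and c ≥ 0 real numbers. For each integer i ≥ 1 define the slice sum S_i = Σ_{r₁ = M^{i−1}}^{M^i} Σ_{r₂ = M^{i−1}}^{M^i} 1/(q·(r₁ + r₂) + c)², the sums being over integers r₁, r₂. Then there exists a constant C > 0 such that for all i ≥ 1, |S_i − κ/q²| ≤ C·M^{−i}, where κ := ln((M + 1)²/(4M)). In particular κ is independent of the slice index i and of c, and S_i → κ/q² as i → ∞. -/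
/-!
Comparing a sum of the decreasing functions `1 / (x + t) ^ 2` and `1 / (x + t)` over `[a, b]`
with the telescoping differences of their antiderivatives `-1 / (x + t)` and `log (x + t)`
gives the corresponding integral up to an error bounded by the first summand. Doing this for
the inner and then for the outer sum shows that `Σ_{r₁, r₂ ∈ [a, b]} 1 / (r₁ + r₂ + t) ^ 2`
differs from `∫_a^b ∫_a^b dx dy / (x + y + t) ^ 2` by `O(1 / a)`. The shift `t` moves that
integral by `O(t / a)`, and for `t = 0`, `b = M a` it equals `log ((M + 1) ^ 2 / (4 M))`.
Take `a = M ^ (i - 1)` and `t = c / q`.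
-/

open Finset Real

theorem sum_Icc_sub_telescope_mem_Icc {φ Ψ : ℕ → ℝ} {a b : ℕ} (hab : a ≤ b)
    (h : ∀ j, a ≤ j → j < b → Ψ j - Ψ (j + 1) ∈ Set.Icc (φ (j + 1)) (φ j)) :
    ∑ r ∈ Icc a b, φ r - (Ψ a - Ψ b) ∈ Set.Icc (φ b) (φ a) := by
  induction b, hab using Nat.le_induction with
  | base => simp
  | succ b hab ih =>
    obtain ⟨ih₁, ih₂⟩ := ih fun j hj hjb => h j hj (by omega)
    obtain ⟨h₁, h₂⟩ := h b hab (by omega)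
    rw [sum_Icc_succ_top (by omega)]
    constructor <;> linarith

theorem log_sub_log_mem_Icc {x y : ℝ} (hx : 0 < x) (hy : 0 < y) :
    log y - log x ∈ Set.Icc ((y - x) / y) ((y - x) / x) := by
  constructor
  · have := log_le_sub_one_of_pos (div_pos hx hy)
    rw [log_div hx.ne' hy.ne'] at this
    have e : x / y - 1 = -((y - x) / y) := by field_simp; ring
    linarith
  · have := log_le_sub_one_of_pos (div_pos hy hx)
    rw [log_div hy.ne' hx.ne'] at this
    have e : y / x - 1 = (y - x) / x := by field_simp
    linarith

theorem one_div_sub_one_div_succ_mem_Icc {x : ℝ} (hx : 0 < x) :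
    1 / x - 1 / (x + 1) ∈ Set.Icc (1 / (x + 1) ^ 2) (1 / x ^ 2) := by
  have e : 1 / x - 1 / (x + 1) = 1 / (x * (x + 1)) := by field_simp; ring
  rw [e]
  constructor <;> apply one_div_le_one_div_of_le <;> nlinarith [mul_pos hx hx]

theorem log_succ_sub_log_mem_Icc {x : ℝ} (hx : 0 < x) :
    log (x + 1) - log x ∈ Set.Icc (1 / (x + 1)) (1 / x) := by
  simpa using log_sub_log_mem_Icc hx (by linarith : 0 < x + 1)

section ShiftedSums

variable {s : ℝ} {a b : ℕ}

theorem sum_Icc_one_div_sq_sub_mem_Icc (hab : a ≤ b) (hs : 0 < a + s) :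
    ∑ r ∈ Icc a b, 1 / ((r : ℝ) + s) ^ 2 - (1 / (a + s) - 1 / (b + s))
      ∈ Set.Icc (1 / (b + s) ^ 2) (1 / (a + s) ^ 2) :=
  sum_Icc_sub_telescope_mem_Icc (φ := fun r : ℕ => 1 / ((r : ℝ) + s) ^ 2)
    (Ψ := fun r : ℕ => 1 / ((r : ℝ) + s)) hab fun j hj _ => by
    have hj : (a : ℝ) ≤ j := by exact_mod_cast hj
    simpa only [Nat.cast_succ, add_right_comm _ (1 : ℝ)]
      using one_div_sub_one_div_succ_mem_Icc (x := j + s) (by linarith)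

theorem sum_Icc_one_div_sub_mem_Icc (hab : a ≤ b) (hs : 0 < a + s) :
    ∑ r ∈ Icc a b, 1 / ((r : ℝ) + s) - (log (b + s) - log (a + s))
      ∈ Set.Icc (1 / (b + s)) (1 / (a + s)) := by
  have := sum_Icc_sub_telescope_mem_Icc (φ := fun r : ℕ => 1 / ((r : ℝ) + s))
    (Ψ := fun r : ℕ => -log ((r : ℝ) + s)) hab fun j hj _ => by
    have hj : (a : ℝ) ≤ j := by exact_mod_cast hj
    simpa only [Nat.cast_succ, add_right_comm _ (1 : ℝ), neg_sub_neg]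
      using log_succ_sub_log_mem_Icc (x := j + s) (by linarith)
  simpa only [sub_neg_eq_add, neg_add_eq_sub] using this

end ShiftedSums

/-- Closed form of `∫_a^b ∫_a^b dx dy / (x + y + t) ^ 2`. -/
noncomputable def doubleIntegralInvSq (t a b : ℝ) : ℝ :=
  2 * log (a + b + t) - log (2 * a + t) - log (2 * b + t)

theorem sum_sum_one_div_sq_sub_doubleIntegralInvSq_mem_Icc {t : ℝ} {a b : ℕ} (ht : 0 ≤ t)
    (ha : 1 ≤ a) (hab : a ≤ b) :
    ∑ r₁ ∈ Icc a b, ∑ r₂ ∈ Icc a b, 1 / ((r₁ : ℝ) + r₂ + t) ^ 2 - doubleIntegralInvSq t a b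
      ∈ Set.Icc 0 (3 / (2 * a + t)) := by
  have ha' : (1 : ℝ) ≤ a := by exact_mod_cast ha
  have hab' : (a : ℝ) ≤ b := by exact_mod_cast hab
  set e : ℕ → ℝ := fun r₁ => ∑ r₂ ∈ Icc a b, 1 / ((r₁ : ℝ) + r₂ + t) ^ 2
    - (1 / ((r₁ : ℝ) + (a + t)) - 1 / ((r₁ : ℝ) + (b + t)))
  have inner : ∀ r₁ ∈ Icc a b, e r₁ ∈ Set.Icc 0 (1 / ((r₁ : ℝ) + (a + t)) ^ 2) := by
    intro r₁ _
    obtain ⟨h₁, h₂⟩ := sum_Icc_one_div_sq_sub_mem_Icc (s := r₁ + t) hab (by positivity)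
    have hsum : ∑ r₂ ∈ Icc a b, 1 / ((r₂ : ℝ) + (r₁ + t)) ^ 2
        = ∑ r₂ ∈ Icc a b, 1 / ((r₁ : ℝ) + r₂ + t) ^ 2 := sum_congr rfl fun _ _ => by ring_nf
    rw [hsum, add_left_comm (a : ℝ), add_left_comm (b : ℝ)] at h₁ h₂
    exact ⟨le_trans (by positivity) h₁, h₂⟩
  have hS : ∑ r₁ ∈ Icc a b, e r₁ = ∑ r₁ ∈ Icc a b, ∑ r₂ ∈ Icc a b, 1 / ((r₁ : ℝ) + r₂ + t) ^ 2
      - (∑ r₁ ∈ Icc a b, 1 / ((r₁ : ℝ) + (a + t)) - ∑ r₁ ∈ Icc a b, 1 / ((r₁ : ℝ) + (b + t))) := by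
    simp only [e, sum_sub_distrib]
  have he₀ : 0 ≤ ∑ r₁ ∈ Icc a b, e r₁ := sum_nonneg fun r h => (inner r h).1
  have he₁ := sum_le_sum fun r h => (inner r h).2
  obtain ⟨-, hg⟩ := sum_Icc_one_div_sq_sub_mem_Icc (s := a + t) hab (by positivity)
  obtain ⟨hA₁, hA₂⟩ := sum_Icc_one_div_sub_mem_Icc (s := a + t) hab (by positivity)
  obtain ⟨hB₁, hB₂⟩ := sum_Icc_one_div_sub_mem_Icc (s := b + t) hab (by positivity)
  have h2a : (a : ℝ) + (a + t) = 2 * a + t := by ring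
  have h2b : (b : ℝ) + (b + t) = 2 * b + t := by ring
  have hab₁ : (b : ℝ) + (a + t) = a + b + t := by ring
  have hab₂ : (a : ℝ) + (b + t) = a + b + t := by ring
  rw [h2a, hab₁] at hg hA₁ hA₂
  rw [h2b, hab₂] at hB₁ hB₂
  have hsq : 1 / (2 * (a : ℝ) + t) ^ 2 ≤ 1 / (2 * a + t) := by
    apply one_div_le_one_div_of_le (by positivity); nlinarith
  have hpos₁ : 0 ≤ 1 / ((a : ℝ) + b + t) := by positivity
  have hpos₂ : 0 ≤ 1 / (2 * (b : ℝ) + t) := by positivity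
  have hthree : 3 / (2 * (a : ℝ) + t) = 3 * (1 / (2 * a + t)) := by ring
  unfold doubleIntegralInvSq
  constructor <;> linarith

theorem abs_doubleIntegralInvSq_sub_doubleIntegralInvSq_zero_le {t a b : ℝ} (ht : 0 ≤ t)
    (ha : 0 < a) (hab : a ≤ b) :
    |doubleIntegralInvSq t a b - doubleIntegralInvSq 0 a b| ≤ t / a := by
  have shift : ∀ x : ℝ, 2 * a ≤ x → log (x + t) - log x ∈ Set.Icc 0 (t / (2 * a)) := by
    intro x hx
    obtain ⟨h₁, h₂⟩ := log_sub_log_mem_Icc (x := x) (y := x + t) (by linarith) (by linarith)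
    rw [add_sub_cancel_left] at h₁ h₂
    exact ⟨le_trans (div_nonneg ht (by linarith)) h₁,
      h₂.trans (div_le_div_of_nonneg_left ht (by positivity) hx)⟩
  obtain ⟨hab₁, hab₂⟩ := shift (a + b) (by linarith)
  obtain ⟨ha₁, ha₂⟩ := shift (2 * a) le_rfl
  obtain ⟨hb₁, hb₂⟩ := shift (2 * b) (by linarith)
  have e : t / a = 2 * (t / (2 * a)) := by field_simp
  unfold doubleIntegralInvSq
  rw [add_zero, add_zero, add_zero]
  rw [abs_le]
  constructor <;> linarith

theorem doubleIntegralInvSq_zero_mul_left {M a : ℝ} (hM : 0 < M) (ha : 0 < a) :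
    doubleIntegralInvSq 0 a (M * a) = log ((M + 1) ^ 2 / (4 * M)) := by
  have e : (M + 1) ^ 2 / (4 * M) = (a + M * a) ^ 2 / ((2 * a) * (2 * (M * a))) := by
    field_simp; ring
  rw [e, log_div (by positivity) (by positivity), log_mul (by positivity) (by positivity), log_pow]
  simp only [doubleIntegralInvSq, add_zero]
  push_cast; ring

theorem abs_sum_sum_one_div_sq_sub_log_le {t : ℝ} {M a : ℕ} (ht : 0 ≤ t) (hM : 1 ≤ M)
    (ha : 1 ≤ a) :
    |∑ r₁ ∈ Icc a (M * a), ∑ r₂ ∈ Icc a (M * a), 1 / ((r₁ : ℝ) + r₂ + t) ^ 2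
        - log (((M : ℝ) + 1) ^ 2 / (4 * M))| ≤ (2 + t) / a := by
  have ha' : (1 : ℝ) ≤ a := by exact_mod_cast ha
  have hM' : (1 : ℝ) ≤ M := by exact_mod_cast hM
  have hab : a ≤ M * a := Nat.le_mul_of_pos_left a hM
  obtain ⟨h₁, h₂⟩ := sum_sum_one_div_sq_sub_doubleIntegralInvSq_mem_Icc ht ha hab
  have hD := abs_doubleIntegralInvSq_sub_doubleIntegralInvSq_zero_le ht (by positivity)
    (by exact_mod_cast hab : (a : ℝ) ≤ (M * a : ℕ))
  push_cast at h₁ h₂ hD ⊢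
  rw [doubleIntegralInvSq_zero_mul_left (by positivity) (by positivity)] at hD
  have h3 : 3 / (2 * (a : ℝ) + t) ≤ 2 / a := by
    rw [div_le_div_iff₀ (by positivity) (by positivity)]; nlinarith
  have e : (2 + t) / (a : ℝ) = 2 / a + t / a := add_div _ _ _
  rw [abs_le] at hD ⊢
  constructor <;> linarith

theorem one_div_mul_add_sq {q : ℝ} (hq : q ≠ 0) (x c : ℝ) :
    1 / (q * x + c) ^ 2 = 1 / (x + c / q) ^ 2 / q ^ 2 := by
  rw [show q * x + c = q * (x + c / q) by field_simp, mul_pow, div_div, mul_comm]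

/-- The slice sums governing the one-loop RG flow of the parameters `q, p` of the
Grosse–Wulkenhaar model in a magnetic field: for `M ≥ 2`, `q > 0`, `c ≥ 0`, the sums
`S_i = Σ_{r₁ = M^{i−1}}^{M^i} Σ_{r₂ = M^{i−1}}^{M^i} 1/(q(r₁ + r₂) + c)²` satisfy
`|S_i − κ/q²| ≤ C·M^{−i}` for all `i ≥ 1`, where `κ = ln((M + 1)²/(4M))` is independent of
the slice index `i` and of `c`; in particular `S_i → κ/q²` as `i → ∞`. -/
theorem gw_slice_sum (M : ℕ) (hM : 2 ≤ M) (q c : ℝ) (hq : 0 < q) (hc : 0 ≤ c) :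
    (∃ C > (0 : ℝ), ∀ i : ℕ, 1 ≤ i →
      |(∑ r₁ ∈ Finset.Icc (M ^ (i - 1)) (M ^ i), ∑ r₂ ∈ Finset.Icc (M ^ (i - 1)) (M ^ i),
            (1 : ℝ) / (q * ((r₁ : ℝ) + (r₂ : ℝ)) + c) ^ 2)
          - Real.log (((M : ℝ) + 1) ^ 2 / (4 * (M : ℝ))) / q ^ 2| ≤ C / (M : ℝ) ^ i)
    ∧ Filter.Tendsto
        (fun i : ℕ =>
          ∑ r₁ ∈ Finset.Icc (M ^ (i - 1)) (M ^ i), ∑ r₂ ∈ Finset.Icc (M ^ (i - 1)) (M ^ i),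
            (1 : ℝ) / (q * ((r₁ : ℝ) + (r₂ : ℝ)) + c) ^ 2)
        Filter.atTop
        (nhds (Real.log (((M : ℝ) + 1) ^ 2 / (4 * (M : ℝ))) / q ^ 2)) := by
  have hM₁ : (1 : ℝ) < M := by exact_mod_cast hM
  have hbound : ∀ i : ℕ, 1 ≤ i →
      |(∑ r₁ ∈ Icc (M ^ (i - 1)) (M ^ i), ∑ r₂ ∈ Icc (M ^ (i - 1)) (M ^ i),
            (1 : ℝ) / (q * ((r₁ : ℝ) + (r₂ : ℝ)) + c) ^ 2)
          - log (((M : ℝ) + 1) ^ 2 / (4 * (M : ℝ))) / q ^ 2|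
        ≤ (2 + c / q) * M / q ^ 2 / (M : ℝ) ^ i := by
    intro i hi
    have hpow : M ^ i = M * M ^ (i - 1) := by rw [← pow_succ']; congr 1; omega
    have hshifted := abs_sum_sum_one_div_sq_sub_log_le (t := c / q) (M := M) (by positivity) (by omega)
      (Nat.one_le_pow _ _ (by omega) : 1 ≤ M ^ (i - 1))
    simp only [one_div_mul_add_sq hq.ne', ← sum_div, ← sub_div, abs_div, abs_of_pos (pow_pos hq 2)]
    have hpow' : (M : ℝ) ^ i = M * M ^ (i - 1) := by exact_mod_cast hpow
    rw [hpow, hpow']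
    calc _ ≤ (2 + c / q) / ((M ^ (i - 1) : ℕ) : ℝ) / q ^ 2 := by gcongr
      _ = _ := by push_cast; field_simp
  refine ⟨⟨_, by positivity, hbound⟩, tendsto_iff_norm_sub_tendsto_zero.2 <|
    squeeze_zero' (.of_forall fun _ => norm_nonneg _) ?_
      ((tendsto_const_nhds (x := (2 + c / q) * M / q ^ 2)).div_atTop
        (tendsto_pow_atTop_atTop_of_one_lt hM₁))⟩
  filter_upwards [Filter.eventually_ge_atTop 1] with i hi using hbound i hi
end
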